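/- Suppose the primal feasible set P(x) = {u ∈ ℝ^n : u ≥ 0, Du ≤ b − Cx} is nonempty for every x in a set X ⊆ ℝ^p, and the dual feasible set {π ∈ ℝ^m : π ≤ 0, Dᵀπ ≤ c} is nonempty. Then the optimal value function h(x) := inf{⟨c, u⟩ : u ∈ P(x)} is finite on X and there exists a constant L > 0, depending only on c, C and D, such that |h(x) − h(x')| ≤ L‖x − x'‖ for all x, x' ∈ X. -/

import Mathlib

/-!
For a right-hand side `v` with a feasible primal, LP duality expresses the value
`inf {c ⬝ᵥ u | u ≥ 0, D u ≤ v}` as the maximum of `v ⬝ᵥ π` over the vertices `π` of the dual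
polyhedron `{π ≤ 0 | π D ≤ c}`. That polyhedron does not depend on `v` and has finitely many
vertices, so the value is a maximum of finitely many fixed linear functions of `v = b - C x`,
hence Lipschitz in `x`.

Strong duality comes from Farkas' lemma: Hahn–Banach separation from a finitely generated cone,
which is closed by conic Carathéodory. A dual feasible point is pushed to a vertex without
decreasing the objective by moving along the kernel of its active constraints until one more
constraint becomes tight; this needs the dual polyhedron to contain no line (`π ≤ 0`) and the
objective not to increase along recession directions (primal feasibility).
-/

open Module Matrix

section Polyhedron

variable {E κ : Type*} [AddCommGroup E] [Module ℝ E] (a : κ → Dual ℝ E) (q : κ → ℝ)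

def polyhedron : Set E := {x | ∀ k, a k x ≤ q k}

def activeKer (x : E) : Submodule ℝ E := ⨅ (k) (_ : a k x = q k), LinearMap.ker (a k)

def IsVertex (x : E) : Prop := x ∈ polyhedron a q ∧ activeKer a q x = ⊥

variable {a q}

theorem mem_activeKer {x d : E} : d ∈ activeKer a q x ↔ ∀ k, a k x = q k → a k d = 0 := by
  simp [activeKer, Submodule.mem_iInf]

theorem finite_setOf_isVertex [Finite κ] : {x | IsVertex a q x}.Finite := by
  refine Set.Finite.of_finite_image (f := fun x => {k | a k x = q k}) (Set.toFinite _) ?_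
  intro x hx y _ hxy
  have hsub : x - y ∈ activeKer a q x := mem_activeKer.2 fun k hk => by
    have hk' : a k y = q k := (Set.ext_iff.1 hxy k).1 hk
    rw [map_sub, hk, hk', sub_self]
  rw [hx.2, Submodule.mem_bot, sub_eq_zero] at hsub
  exact hsub

theorem exists_ascent_direction {φ : Dual ℝ E} (hline : ∀ d, (∀ k, a k d = 0) → d = 0)
    (hrec : ∀ d, (∀ k, a k d ≤ 0) → φ d ≤ 0) {d : E} (hd : d ≠ 0) :
    ∃ e, (e = d ∨ e = -d) ∧ 0 ≤ φ e ∧ ∃ k, 0 < a k e := by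
  by_cases hpos : ∃ k, 0 < a k d
  · by_cases hneg : ∃ k, 0 < a k (-d)
    · rcases le_total 0 (φ d) with h | h
      · exact ⟨d, .inl rfl, h, hpos⟩
      · exact ⟨-d, .inr rfl, by simpa using h, hneg⟩
    · push Not at hneg
      exact ⟨d, .inl rfl, by simpa using hrec _ hneg, hpos⟩
  · push Not at hpos
    refine ⟨-d, .inr rfl, by simpa using hrec _ hpos, ?_⟩
    by_contra! hneg
    exact hd (hline d fun k => le_antisymm (hpos k) (by simpa using hneg k))

theorem exists_add_smul_mem_polyhedron_eq [Fintype κ] {x e : E} (hx : x ∈ polyhedron a q)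
    (he : ∃ k, 0 < a k e) :
    ∃ t : ℝ, 0 ≤ t ∧ x + t • e ∈ polyhedron a q ∧ ∃ k, 0 < a k e ∧ a k (x + t • e) = q k := by
  classical
  obtain ⟨k₀, hk₀, hmin⟩ := Finset.exists_min_image {k | 0 < a k e}
    (fun k => (q k - a k x) / a k e) (by simpa [Finset.Nonempty] using he)
  rw [Finset.mem_filter_univ] at hk₀
  refine ⟨(q k₀ - a k₀ x) / a k₀ e, div_nonneg (sub_nonneg.2 (hx k₀)) hk₀.le,
    fun k => ?_, k₀, hk₀, ?_⟩
  · rw [map_add, map_smul, smul_eq_mul]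
    rcases le_or_gt (a k e) 0 with hk | hk
    · nlinarith [hx k, div_nonneg (sub_nonneg.2 (hx k₀)) hk₀.le]
    · have := hmin k (by simpa using hk)
      rw [le_div_iff₀ hk] at this
      linarith
  · rw [map_add, map_smul, smul_eq_mul, div_mul_cancel₀ _ hk₀.ne']
    ring

theorem activeKer_add_smul_lt {x e : E} {t : ℝ} {k : κ} (he : e ∈ activeKer a q x)
    (hk : a k e ≠ 0) (hkt : a k (x + t • e) = q k) :
    activeKer a q (x + t • e) < activeKer a q x := by
  have hstay : ∀ k, a k x = q k → a k (x + t • e) = q k := fun k hk => by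
    rw [map_add, map_smul, mem_activeKer.1 he k hk, smul_zero, add_zero, hk]
  refine SetLike.lt_iff_le_and_exists.2 ⟨fun d hd => ?_, e, he, fun h => hk ?_⟩
  · exact mem_activeKer.2 fun k hk => mem_activeKer.1 hd k (hstay k hk)
  · exact mem_activeKer.1 h k hkt

theorem exists_isVertex_le [FiniteDimensional ℝ E] [Fintype κ] (φ : Dual ℝ E)
    (hline : ∀ d, (∀ k, a k d = 0) → d = 0) (hrec : ∀ d, (∀ k, a k d ≤ 0) → φ d ≤ 0)
    {x : E} (hx : x ∈ polyhedron a q) : ∃ y, IsVertex a q y ∧ φ x ≤ φ y := by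
  induction hn : finrank ℝ (activeKer a q x) using Nat.strong_induction_on generalizing x with
  | _ n ih =>
  by_cases hK : activeKer a q x = ⊥
  · exact ⟨x, ⟨hx, hK⟩, le_rfl⟩
  obtain ⟨d, hdK, hd⟩ := Submodule.exists_mem_ne_zero_of_ne_bot hK
  obtain ⟨e, hed, hφe, he⟩ := exists_ascent_direction hline hrec hd
  have heK : e ∈ activeKer a q x := by
    rcases hed with rfl | rfl
    exacts [hdK, neg_mem hdK]
  obtain ⟨t, ht, hxt, k, hk, hkt⟩ := exists_add_smul_mem_polyhedron_eq hx he
  obtain ⟨y, hy, hφy⟩ := ih _ (hn ▸ Submodule.finrank_lt_finrank_of_lt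
    (activeKer_add_smul_lt heK hk.ne' hkt)) hxt rfl
  refine ⟨y, hy, le_trans ?_ hφy⟩
  rw [map_add, map_smul, smul_eq_mul]
  nlinarith

end Polyhedron

/-- Conic Carathéodory: `y` is a vertex of the fibre `{y ≥ 0 | L y = L x}`. -/
theorem LinearMap.exists_nonneg_map_eq_with_independent_support {ι V : Type*} [Fintype ι]
    [AddCommGroup V] [Module ℝ V] (L : (ι → ℝ) →ₗ[ℝ] V) {x : ι → ℝ} (hx : 0 ≤ x) :
    ∃ y, 0 ≤ y ∧ L y = L x ∧ ∀ d ∈ LinearMap.ker L, (∀ i, y i = 0 → d i = 0) → d = 0 := by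
  let a : ι → Dual ℝ (LinearMap.ker L) :=
    fun i => -(LinearMap.proj i ∘ₗ (LinearMap.ker L).subtype)
  have ha : ∀ i z, a i z = -(z : ι → ℝ) i := fun _ _ => rfl
  obtain ⟨z, ⟨hz, hzK⟩, -⟩ := exists_isVertex_le (a := a) (q := x) 0
    (fun d hd => Subtype.ext <| funext fun i => by simpa [ha] using hd i)
    (fun _ _ => le_rfl) (x := 0) (fun i => by simpa [ha] using hx i)
  refine ⟨x + z, fun i => ?_, by simp, fun d hd hsupp => ?_⟩
  · have := hz i
    simp only [ha, Pi.zero_apply, Pi.add_apply] at this ⊢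
    linarith
  · have : (⟨d, hd⟩ : LinearMap.ker L) ∈ activeKer a x z := mem_activeKer.2 fun i hi => by
      simp only [ha, neg_eq_iff_eq_neg] at hi ⊢
      simpa using hsupp i (by simp [hi])
    simpa [hzK] using this

theorem LinearMap.isClosed_image_of_disjoint_ker {E F : Type*} [NormedAddCommGroup E]
    [NormedSpace ℝ E] [FiniteDimensional ℝ E] [NormedAddCommGroup F] [NormedSpace ℝ F]
    (L : E →ₗ[ℝ] F) {W : Submodule ℝ E} (hW : Disjoint W (LinearMap.ker L)) {S : Set E}
    (hS : IsClosed S) (hSW : S ⊆ W) : IsClosed (L '' S) := by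
  have hinj : LinearMap.ker (L ∘ₗ W.subtype) = ⊥ := by
    rwa [LinearMap.ker_comp, ← Submodule.disjoint_iff_comap_eq_bot]
  have himage : L '' S = (L ∘ₗ W.subtype) '' (W.subtype ⁻¹' S) := by
    rw [LinearMap.coe_comp, Set.image_comp, Submodule.coe_subtype,
      Set.image_preimage_eq_inter_range, Subtype.range_coe, Set.inter_eq_left.2 hSW]
  rw [himage]
  exact (LinearMap.isClosedEmbedding_of_injective hinj).isClosedMap _
    (hS.preimage continuous_subtype_val)

theorem LinearMap.isClosed_image_Ici_zero {ι V : Type*} [Fintype ι] [NormedAddCommGroup V]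
    [NormedSpace ℝ V] (L : (ι → ℝ) →ₗ[ℝ] V) : IsClosed (L '' Set.Ici 0) := by
  let W : Set ι → Submodule ℝ (ι → ℝ) := fun s => Submodule.pi sᶜ fun _ => ⊥
  have hW : ∀ s d, d ∈ W s ↔ ∀ i ∉ s, d i = 0 := by simp [W]
  have hcover : L '' Set.Ici 0 =
      ⋃ (s : Set ι) (_ : Disjoint (W s) (LinearMap.ker L)), L '' (Set.Ici 0 ∩ W s) := by
    ext v
    simp only [Set.mem_iUnion]
    constructor
    · rintro ⟨x, hx, rfl⟩
      obtain ⟨y, hy, hLy, hyK⟩ := L.exists_nonneg_map_eq_with_independent_support hx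
      refine ⟨{i | y i ≠ 0}, ?_, y, ⟨hy, (hW _ _).2 fun i hi => by simpa using hi⟩, hLy⟩
      rw [Submodule.disjoint_def]
      exact fun d hd hdK => hyK d hdK fun i hi => (hW _ _).1 hd i (by simpa using hi)
    · rintro ⟨s, -, x, hx, rfl⟩
      exact ⟨x, hx.1, rfl⟩
  rw [hcover]
  exact isClosed_iUnion_of_finite fun s => isClosed_iUnion_of_finite fun hs =>
    L.isClosed_image_of_disjoint_ker hs (isClosed_Ici.inter (W s).closed_of_finiteDimensional)
      Set.inter_subset_right

/-- Farkas' lemma. -/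
theorem Matrix.exists_nonneg_vecMul_dotProduct_neg {ι κ : Type*} [Fintype ι] [Fintype κ]
    (A : Matrix κ ι ℝ) {w : κ → ℝ} (hw : ∀ x, 0 ≤ x → A *ᵥ x ≠ w) :
    ∃ y, 0 ≤ y ᵥ* A ∧ y ⬝ᵥ w < 0 := by
  classical
  obtain ⟨f, u, hfK, hfw⟩ := geometric_hahn_banach_closed_point
    ((convex_Ici 0).linear_image A.mulVecLin) A.mulVecLin.isClosed_image_Ici_zero
    fun ⟨x, hx, hxw⟩ => hw x hx hxw
  have hu : 0 < u := by simpa using hfK 0 ⟨0, Set.self_mem_Ici, map_zero _⟩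
  have hf : ∀ x, 0 ≤ x → f (A *ᵥ x) ≤ 0 := by
    intro x hx
    by_contra! h
    have := hfK _ ⟨(u / f (A *ᵥ x)) • x, smul_nonneg (div_nonneg hu.le h.le) hx, rfl⟩
    simp [div_mul_cancel₀ _ h.ne'] at this
  set y : κ → ℝ := fun k => -f (Pi.single k 1)
  have hy : ∀ z, y ⬝ᵥ z = -f z := fun z => by
    conv_rhs => rw [pi_eq_sum_univ' z]
    simp [y, dotProduct, mul_comm]
  refine ⟨y, fun i => ?_, by linarith [hy w]⟩
  have hfi := hf _ (Pi.single_nonneg.2 zero_le_one : 0 ≤ Pi.single i (1 : ℝ))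
  have hcol : (y ᵥ* A) i = y ⬝ᵥ (A *ᵥ Pi.single i 1) := by
    rw [dotProduct_mulVec, dotProduct_single, mul_one]
  rw [Pi.zero_apply, hcol, hy]
  linarith

section LinearProgram

variable {m n : Type*} [Fintype m] {D : Matrix m n ℝ} {c : n → ℝ}

variable (D c) in
def dualFeasible : Set (m → ℝ) := {π | π ≤ 0 ∧ π ᵥ* D ≤ c}

variable (D) in
def dualConstraints : m ⊕ n → Dual ℝ (m → ℝ) :=
  Sum.elim LinearMap.proj fun i => LinearMap.proj i ∘ₗ D.vecMulLinear

variable (D c) in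
def dualVertices : Set (m → ℝ) := {π | IsVertex (dualConstraints D) (Sum.elim 0 c) π}

theorem polyhedron_dualConstraints :
    polyhedron (dualConstraints D) (Sum.elim 0 c) = dualFeasible D c := by
  ext π
  simp [polyhedron, dualFeasible, dualConstraints, Sum.forall, Pi.le_def]

theorem dualVertices_subset_dualFeasible : dualVertices D c ⊆ dualFeasible D c :=
  fun _ hπ => polyhedron_dualConstraints.subset hπ.1

variable (D c) in
theorem dualVertices_finite [Finite n] : (dualVertices D c).Finite := finite_setOf_isVertex

variable [Fintype n]

variable (D) in
def primalFeasible (v : m → ℝ) : Set (n → ℝ) := {u | 0 ≤ u ∧ D *ᵥ u ≤ v}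

variable (D c) in
noncomputable def lpValue (v : m → ℝ) : ℝ := sInf ((c ⬝ᵥ ·) '' primalFeasible D v)

theorem dotProduct_le_of_mem_dualFeasible {v : m → ℝ} {π : m → ℝ} {u : n → ℝ}
    (hπ : π ∈ dualFeasible D c) (hu : u ∈ primalFeasible D v) : v ⬝ᵥ π ≤ c ⬝ᵥ u := by
  have hslack : 0 ≤ (v - D *ᵥ u) ⬝ᵥ -π :=
    dotProduct_nonneg_of_nonneg (sub_nonneg.2 hu.2) (neg_nonneg.2 hπ.1)
  have hcost : (π ᵥ* D) ⬝ᵥ u ≤ c ⬝ᵥ u := dotProduct_le_dotProduct_of_nonneg_right hπ.2 hu.1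
  rw [dotProduct_neg, sub_dotProduct, dotProduct_comm (D *ᵥ u), dotProduct_mulVec] at hslack
  linarith

theorem exists_mem_dualFeasible_lt_dotProduct {v : m → ℝ} {γ : ℝ}
    (hP : (primalFeasible D v).Nonempty) (hγ : ∀ u ∈ primalFeasible D v, γ < c ⬝ᵥ u) :
    ∃ π ∈ dualFeasible D c, γ < v ⬝ᵥ π := by
  classical
  -- columns `D` and `1` carry `u` and the slack of `D u ≤ v`, the last row carries the cost
  let A : Matrix (m ⊕ Unit) (n ⊕ m) ℝ := fromBlocks D 1 (replicateRow Unit c) 0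
  obtain ⟨y, hyA, hyw⟩ := A.exists_nonneg_vecMul_dotProduct_neg (w := Sum.elim v fun _ => γ) <| by
    intro x hx hAx
    have hv : D *ᵥ (x ∘ .inl) + x ∘ .inr = v := by
      ext j; simpa [A, fromBlocks_mulVec] using congrFun hAx (.inl j)
    have hc : c ⬝ᵥ (x ∘ .inl) = γ := by
      simpa [A, fromBlocks_mulVec, replicateRow_mulVec_eq_const] using congrFun hAx (.inr ())
    refine (hγ (x ∘ .inl) ⟨fun i => hx _, ?_⟩).ne' hc
    rw [← hv]
    exact le_add_of_nonneg_right fun j => hx _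
  obtain ⟨π, β, rfl⟩ : ∃ π β, y = Sum.elim π fun _ => β :=
    ⟨y ∘ .inl, y (.inr ()), by ext (j | _) <;> rfl⟩
  have hπ : 0 ≤ π := fun j => by simpa [A, vecMul_fromBlocks] using hyA (.inr j)
  have hπD : ∀ i, 0 ≤ (π ᵥ* D) i + β * c i := fun i => by
    simpa [A, vecMul_fromBlocks, vecMul, dotProduct] using hyA (.inl i)
  have hπv : π ⬝ᵥ v + β * γ < 0 := by
    simpa [dotProduct, Fintype.sum_sum_type] using hyw
  have hβ : 0 < β := by
    obtain ⟨u₀, hu₀⟩ := hP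
    by_contra! hβ
    have h1 : 0 ≤ (π ᵥ* D + β • c) ⬝ᵥ u₀ :=
      dotProduct_nonneg_of_nonneg (fun i => by simpa using hπD i) hu₀.1
    have h2 : π ⬝ᵥ (D *ᵥ u₀) ≤ π ⬝ᵥ v := dotProduct_le_dotProduct_of_nonneg_left hu₀.2 hπ
    have h3 : β * (c ⬝ᵥ u₀) ≤ β * γ := mul_le_mul_of_nonpos_left (hγ u₀ hu₀).le hβ
    rw [add_dotProduct, ← dotProduct_mulVec, smul_dotProduct, smul_eq_mul] at h1
    linarith
  refine ⟨-β⁻¹ • π, ⟨fun j => ?_, fun i => ?_⟩, ?_⟩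
  · simpa using mul_nonneg (inv_nonneg.2 hβ.le) (hπ j)
  · rw [smul_vecMul, Pi.smul_apply, smul_eq_mul, neg_mul, neg_le, le_inv_mul_iff₀ hβ]
    linarith [hπD i]
  · rw [dotProduct_smul, smul_eq_mul, dotProduct_comm, neg_mul, lt_neg, inv_mul_lt_iff₀ hβ]
    linarith

theorem bddBelow_image_primalFeasible {π : m → ℝ} (hπ : π ∈ dualFeasible D c) (v : m → ℝ) :
    BddBelow ((c ⬝ᵥ ·) '' primalFeasible D v) :=
  ⟨v ⬝ᵥ π, by rintro _ ⟨u, hu, rfl⟩; exact dotProduct_le_of_mem_dualFeasible hπ hu⟩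

theorem exists_mem_dualVertices_dotProduct_le {v π : m → ℝ} (hP : (primalFeasible D v).Nonempty)
    (hπ : π ∈ dualFeasible D c) : ∃ π' ∈ dualVertices D c, v ⬝ᵥ π ≤ v ⬝ᵥ π' := by
  obtain ⟨u, hu⟩ := hP
  refine exists_isVertex_le (dotProductBilin ℝ ℝ v) (fun d hd => funext fun j => hd (.inl j))
    (fun d hd => ?_) (polyhedron_dualConstraints.symm.subset hπ)
  have hd : d ∈ dualFeasible D 0 := by
    rw [← polyhedron_dualConstraints]
    exact fun k => by cases k <;> simpa using hd _
  simpa using dotProduct_le_of_mem_dualFeasible hd hu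

theorem isGreatest_lpValue {v : m → ℝ} (hP : (primalFeasible D v).Nonempty)
    (hD : (dualFeasible D c).Nonempty) :
    IsGreatest ((v ⬝ᵥ ·) '' dualVertices D c) (lpValue D c v) := by
  obtain ⟨π₀, hπ₀⟩ := hD
  obtain ⟨π, hπ, hmax⟩ := Set.exists_max_image _ (v ⬝ᵥ ·) (dualVertices_finite D c)
    (let ⟨π, hπ, _⟩ := exists_mem_dualVertices_dotProduct_le hP hπ₀; ⟨π, hπ⟩)
  suffices lpValue D c v = v ⬝ᵥ π by
    rw [this]
    exact ⟨⟨π, hπ, rfl⟩, by rintro _ ⟨π', hπ', rfl⟩; exact hmax π' hπ'⟩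
  have hweak : ∀ u ∈ primalFeasible D v, v ⬝ᵥ π ≤ c ⬝ᵥ u :=
    fun u hu => dotProduct_le_of_mem_dualFeasible (dualVertices_subset_dualFeasible hπ) hu
  refine le_antisymm ?_ (le_csInf (hP.image _) (by rintro _ ⟨u, hu, rfl⟩; exact hweak u hu))
  by_contra! hlt
  obtain ⟨π', hπ', hgt⟩ := exists_mem_dualFeasible_lt_dotProduct hP fun u hu =>
    hlt.trans_le <| csInf_le (bddBelow_image_primalFeasible hπ₀ v) ⟨u, hu, rfl⟩
  obtain ⟨π'', hπ'', hle⟩ := exists_mem_dualVertices_dotProduct_le hP hπ'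
  exact (hgt.trans_le hle).not_ge (hmax π'' hπ'')

end LinearProgram

theorem abs_sub_le_of_isGreatest_image {α β : Type*} [AddCommGroup β] [LinearOrder β]
    [IsOrderedAddMonoid β] {S : Set α} {f g : α → β} {a b ε : β} (ha : IsGreatest (f '' S) a)
    (hb : IsGreatest (g '' S) b) (hfg : ∀ s ∈ S, |f s - g s| ≤ ε) : |a - b| ≤ ε := by
  obtain ⟨⟨s, hs, rfl⟩, ha⟩ := ha
  obtain ⟨⟨t, ht, rfl⟩, hb⟩ := hb
  refine abs_sub_le_iff.2 ⟨?_, ?_⟩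
  · exact (sub_le_sub_left (hb ⟨s, hs, rfl⟩) _).trans (abs_sub_le_iff.1 (hfg s hs)).1
  · exact (sub_le_sub_left (ha ⟨t, ht, rfl⟩) _).trans (abs_sub_le_iff.1 (hfg t ht)).2

theorem Matrix.abs_dotProduct_mulVec_le {m p : Type*} [Fintype m] [Fintype p]
    (C : Matrix m p ℝ) (π : m → ℝ) (z : EuclideanSpace ℝ p) :
    |π ⬝ᵥ C *ᵥ z.ofLp| ≤ ‖WithLp.toLp 2 (π ᵥ* C)‖ * ‖z‖ := by
  rw [dotProduct_mulVec, dotProduct_comm]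
  exact abs_real_inner_le_norm (WithLp.toLp 2 (π ᵥ* C)) z

/-- Lipschitz continuity of the LP value function
`h(x) = inf {⟨c, u⟩ : u ≥ 0, D u ≤ b - C x}` with respect to the right-hand-side
parameter `x`: if the primal feasible set is nonempty for every `x ∈ X` and the
dual feasible set `{π ≤ 0 : Dᵀ π ≤ c}` is nonempty, then `h` is finite on `X`
(the infimum is over a nonempty set bounded below) and there is `L > 0`
(depending only on `c`, `C`, `D`) with `|h(x) - h(x')| ≤ L ‖x - x'‖` on `X`. -/
theorem lp_value_function_lipschitz (m n p : ℕ)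
    (D : Matrix (Fin m) (Fin n) ℝ) (C : Matrix (Fin m) (Fin p) ℝ)
    (b : Fin m → ℝ) (c : Fin n → ℝ) (X : Set (EuclideanSpace ℝ (Fin p)))
    (hprimal : ∀ x ∈ X, ({u : Fin n → ℝ | (∀ i, 0 ≤ u i) ∧
        ∀ j, D.mulVec u j ≤ b j - C.mulVec x j}).Nonempty)
    (hdual : ({π : Fin m → ℝ | (∀ j, π j ≤ 0) ∧
        ∀ i, D.transpose.mulVec π i ≤ c i}).Nonempty) :
    (∀ x ∈ X,
      ((fun u : Fin n → ℝ => ∑ i, c i * u i) ''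
          {u : Fin n → ℝ | (∀ i, 0 ≤ u i) ∧
            ∀ j, D.mulVec u j ≤ b j - C.mulVec x j}).Nonempty ∧
      BddBelow ((fun u : Fin n → ℝ => ∑ i, c i * u i) ''
          {u : Fin n → ℝ | (∀ i, 0 ≤ u i) ∧
            ∀ j, D.mulVec u j ≤ b j - C.mulVec x j})) ∧
    ∃ L : ℝ, 0 < L ∧ ∀ x ∈ X, ∀ x' ∈ X,
      |sInf ((fun u : Fin n → ℝ => ∑ i, c i * u i) ''
          {u : Fin n → ℝ | (∀ i, 0 ≤ u i) ∧
            ∀ j, D.mulVec u j ≤ b j - C.mulVec x j}) -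
        sInf ((fun u : Fin n → ℝ => ∑ i, c i * u i) ''
          {u : Fin n → ℝ | (∀ i, 0 ≤ u i) ∧
            ∀ j, D.mulVec u j ≤ b j - C.mulVec x' j})|
        ≤ L * ‖x - x'‖ := by
  obtain ⟨π₀, hπ₀⟩ := hdual
  have hπ₀ : π₀ ∈ dualFeasible D c := ⟨hπ₀.1, fun i => by simpa [mulVec_transpose] using hπ₀.2 i⟩
  refine ⟨fun x hx => ⟨(hprimal x hx).image _, bddBelow_image_primalFeasible hπ₀ _⟩, ?_⟩
  set K := ∑ π ∈ (dualVertices_finite D c).toFinset, ‖WithLp.toLp 2 (π ᵥ* C)‖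
  have hK : ∀ π ∈ dualVertices D c, ‖WithLp.toLp 2 (π ᵥ* C)‖ ≤ K := fun π hπ =>
    Finset.single_le_sum (f := fun π => ‖WithLp.toLp 2 (π ᵥ* C)‖) (fun _ _ => norm_nonneg _)
      ((Set.Finite.mem_toFinset _).2 hπ)
  refine ⟨K + 1, by positivity, fun x hx x' hx' => ?_⟩
  refine abs_sub_le_of_isGreatest_image (isGreatest_lpValue (hprimal x hx) ⟨π₀, hπ₀⟩)
    (isGreatest_lpValue (hprimal x' hx') ⟨π₀, hπ₀⟩) fun π hπ => ?_
  calc |(b - C *ᵥ x.ofLp) ⬝ᵥ π - (b - C *ᵥ x'.ofLp) ⬝ᵥ π| = |π ⬝ᵥ C *ᵥ (x' - x).ofLp| := by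
        rw [← sub_dotProduct, sub_sub_sub_cancel_left, dotProduct_comm, WithLp.ofLp_sub,
          mulVec_sub]
    _ ≤ ‖WithLp.toLp 2 (π ᵥ* C)‖ * ‖x' - x‖ := C.abs_dotProduct_mulVec_le π _
    _ ≤ (K + 1) * ‖x - x'‖ := by
        rw [norm_sub_rev]
        gcongr
        linarith [hK π hπ]
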